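/- Let p, q be positive integers with p ≥ q, and for 0 ≤ d ≤ q-1 let C_d = [(p-1)!/(p-q)!] · [(-q)_d (1-q)_d] / [d! (p-q+1)_d]. Then each C_d is positive and Σ_{d=0}^{q-1} C_d = (p+q-1)!/p!. -/

import Mathlib

/-!
After cancelling the signs of the two Pochhammer symbols at negative integers, the coefficient is
`C_d = (q-1)! · C(q, d) · C(p-1, q-1-d)`, a positive integer for `d < q ≤ p`. Vandermonde's identity
sums `C(q, d) · C(p-1, q-1-d)` over `d` to `C(p+q-1, q-1)`, and `(q-1)! · C(p+q-1, q-1)` is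
`(p+q-1)!/p!`.
-/

open Nat Finset

noncomputable def hypergeomCoeff (p q d : ℕ) : ℝ :=
  (((p - 1).factorial : ℝ) / ((p - q).factorial : ℝ)) *
    ((ascPochhammer ℝ d).eval (-(q : ℝ)) * (ascPochhammer ℝ d).eval (1 - (q : ℝ))) /
    ((d.factorial : ℝ) * (ascPochhammer ℝ d).eval ((p : ℝ) - (q : ℝ) + 1))

theorem ascPochhammer_eval_neg_natCast {R : Type*} [CommRing R] (n k : ℕ) :
    (ascPochhammer R k).eval (-(n : R)) = (-1) ^ k * n.descFactorial k := by
  rw [ascPochhammer_eval_neg_eq_descPochhammer, descPochhammer_eval_eq_descFactorial]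

theorem Nat.sum_range_choose_mul_choose_sub (m n k : ℕ) :
    ∑ i ∈ range (k + 1), m.choose i * n.choose (k - i) = (m + n).choose k := by
  rw [add_choose_eq, Finset.Nat.sum_antidiagonal_eq_sum_range_succ_mk]

section

variable {p q d : ℕ}

theorem factorial_mul_ascFactorial_mul_choose_mul_choose (hd : d < q) (hpq : q ≤ p) :
    (p - q)! * d ! * (p - q + 1).ascFactorial d *
        ((q - 1)! * q.choose d * (p - 1).choose (q - 1 - d)) =
      (p - 1)! * q.descFactorial d * (q - 1).descFactorial d := by
  have hq_fact : (q - 1)! = (q - 1 - d)! * (q - 1).descFactorial d :=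
    (factorial_mul_descFactorial (by omega)).symm
  have hp_fact := choose_mul_factorial_mul_factorial (n := p - 1) (k := q - 1 - d) (by omega)
  rw [show p - 1 - (q - 1 - d) = p - q + d by omega] at hp_fact
  rw [descFactorial_eq_factorial_mul_choose, hq_fact, ← hp_fact, ← factorial_mul_ascFactorial]
  ring

theorem hypergeomCoeff_eq (hd : d < q) (hpq : q ≤ p) :
    hypergeomCoeff p q d = (((q - 1)! * q.choose d * (p - 1).choose (q - 1 - d) : ℕ) : ℝ) := by
  have h_one_sub : (1 : ℝ) - q = -((q - 1 : ℕ) : ℝ) := by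
    rw [Nat.cast_sub (by omega)]; ring
  have h_shift : (p : ℝ) - q + 1 = ((p - q + 1 : ℕ) : ℝ) := by
    rw [Nat.cast_add, Nat.cast_sub hpq, Nat.cast_one]
  have h_signs : ((-1 : ℝ) ^ d) * (-1) ^ d = 1 := by
    rw [← mul_pow]; norm_num
  have h_cleared := factorial_mul_ascFactorial_mul_choose_mul_choose hd hpq
  rw [hypergeomCoeff, h_one_sub, h_shift, ascPochhammer_eval_neg_natCast,
    ascPochhammer_eval_neg_natCast, ← Nat.cast_ascFactorial, div_mul_eq_mul_div, div_div,
    div_eq_iff (by positivity)]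
  calc _ = ((-1 : ℝ) ^ d * (-1) ^ d) *
        ((p - 1)! * q.descFactorial d * (q - 1).descFactorial d : ℕ) := by push_cast; ring
    _ = _ := by rw [h_signs, one_mul, ← h_cleared]; push_cast; ring

theorem hypergeomCoeff_pos (hd : d < q) (hpq : q ≤ p) : 0 < hypergeomCoeff p q d := by
  rw [hypergeomCoeff_eq hd hpq]
  have := choose_pos (n := p - 1) (k := q - 1 - d) (by omega)
  have := choose_pos hd.le
  positivity

theorem sum_hypergeomCoeff (hq : 0 < q) (hpq : q ≤ p) :
    ∑ d ∈ range q, hypergeomCoeff p q d = ((p + q - 1)! : ℝ) / p ! := by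
  have h_vandermonde :
      ∑ d ∈ range q, (q - 1)! * q.choose d * (p - 1).choose (q - 1 - d) =
        (q - 1)! * (p + q - 1).choose (q - 1) := by
    simp only [mul_assoc, ← mul_sum]
    rw [show p + q - 1 = q + (p - 1) by omega, ← sum_range_choose_mul_choose_sub,
      Nat.sub_add_cancel hq]
  have h_factorials : (q - 1)! * (p + q - 1).choose (q - 1) * p ! = (p + q - 1)! := by
    rw [mul_comm (q - 1)!, ← choose_mul_factorial_mul_factorial (by omega : q - 1 ≤ p + q - 1),
      show p + q - 1 - (q - 1) = p by omega]
  rw [sum_congr rfl fun d hd => hypergeomCoeff_eq (mem_range.mp hd) hpq, ← Nat.cast_sum,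
    h_vandermonde, eq_div_iff (by positivity), ← h_factorials]
  push_cast; ring

end

/-- The coefficients `C_d = (p-1)!/(p-q)! · (-q)_d (1-q)_d / (d! (p-q+1)_d)` are positive and
sum to `(p+q-1)!/p!`. -/
theorem stmt2 (p q : ℕ) (hq : 0 < q) (hpq : q ≤ p) :
    (∀ d < q,
      0 < (((p - 1).factorial : ℝ) / ((p - q).factorial : ℝ)) *
            ((ascPochhammer ℝ d).eval (-(q : ℝ)) * (ascPochhammer ℝ d).eval (1 - (q : ℝ))) /
            ((d.factorial : ℝ) * (ascPochhammer ℝ d).eval ((p : ℝ) - (q : ℝ) + 1))) ∧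
    ∑ d ∈ Finset.range q,
        (((p - 1).factorial : ℝ) / ((p - q).factorial : ℝ)) *
            ((ascPochhammer ℝ d).eval (-(q : ℝ)) * (ascPochhammer ℝ d).eval (1 - (q : ℝ))) /
            ((d.factorial : ℝ) * (ascPochhammer ℝ d).eval ((p : ℝ) - (q : ℝ) + 1)) =
      ((p + q - 1).factorial : ℝ) / (p.factorial : ℝ) :=
  ⟨fun _ hd => hypergeomCoeff_pos hd hpq, sum_hypergeomCoeff hq hpq⟩
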